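/- Let d, n be positive natural numbers, a : Fin d → Fin n → Bool, k, k' : Fin n with k ≠ k', and c : Bool. Let g : Fin d → Bool be a forger's guess, and let p' : Fin d → Option (Fin n → Bool) be any forged proof sequence for the outcome ¬c built from g, i.e. p' l = none whenever a l k' = c, and whenever a l k' = ¬c we have p' l = some t for some tuple t : Fin n → Bool with t k' = ¬c and t k = g l. Then the forged proof passes the honest aggregator's consistency check, i.e. P_{c, ¬c}(proofSeq a k c, k, k') = P_{c, ¬c}(p', k, k'), if and only if the guess is correct at every cryptic index: for every l : Fin d with a l k' = ¬c, g l = a l k. (Deterministic core of Theorem 1: a malicious aggregator's forgery goes undetected only if he guesses the hidden bit in position k correctly at every one of the cryptic tuples.) -/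

import Mathlib

/-- The consistent proof sequence built from the bit sequence `a`, the position `k`
and the verification outcome `c`. -/
def proofSeq {d n : ℕ} (a : Fin d → Fin n → Bool) (k : Fin n) (c : Bool) :
    Fin d → Option (Fin n → Bool) :=
  fun l => if a l k = c then some (a l) else none

/-- `P_{x,y}(p, k, k')`: the set of indices of non-cryptic tuples of `p` whose bit
in position `k` equals `x` and whose bit in position `k'` equals `y`. -/
def Pxy {d n : ℕ} (p : Fin d → Option (Fin n → Bool)) (k k' : Fin n) (x y : Bool) :
    Finset (Fin d) :=
  Finset.univ.filter (fun l => ∃ t, p l = some t ∧ t k = x ∧ t k' = y)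

/-!
Membership of an index `l` in `P_{c,¬c}` depends only on the tuple at `l`. For the honest
sequence it means `a l k = c` and `a l k' = ¬c`; for the forgery it means `a l k' = ¬c` and
`g l = c`. At a cryptic index (`a l k' = ¬c`) the two conditions agree exactly when
`g l = a l k`, and at every other index both fail.
-/

section Pxy

variable {d n : ℕ} {p : Fin d → Option (Fin n → Bool)} {k k' : Fin n} {x y : Bool} {l : Fin d}

theorem mem_Pxy_of_eq_some {t : Fin n → Bool} (h : p l = some t) :
    l ∈ Pxy p k k' x y ↔ t k = x ∧ t k' = y := by
  simp [Pxy, h]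

theorem notMem_Pxy_of_eq_none (h : p l = none) : l ∉ Pxy p k k' x y := by
  simp [Pxy, h]

theorem mem_Pxy_proofSeq {a : Fin d → Fin n → Bool} {c : Bool} :
    l ∈ Pxy (proofSeq a k c) k k' x y ↔ a l k = c ∧ a l k = x ∧ a l k' = y := by
  by_cases hc : a l k = c
  · have hl : proofSeq a k c l = some (a l) := if_pos hc
    simp [mem_Pxy_of_eq_some hl, hc]
  · have hl : proofSeq a k c l = none := if_neg hc
    simp [notMem_Pxy_of_eq_none hl, hc]

end Pxy

theorem Bool.eq_iff_eq_iff_eq {x y c : Bool} : (x = c ↔ y = c) ↔ y = x := by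
  cases x <;> cases y <;> cases c <;> simp

theorem forged_proof_passes_iff_guess_correct_general (d n : ℕ)
    (a : Fin d → Fin n → Bool) (k k' : Fin n) (c : Bool)
    (g : Fin d → Bool) (p' : Fin d → Option (Fin n → Bool))
    (hnone : ∀ l : Fin d, a l k' = c → p' l = none)
    (hsome : ∀ l : Fin d, a l k' = !c →
      ∃ t : Fin n → Bool, p' l = some t ∧ t k' = !c ∧ t k = g l) :
    Pxy (proofSeq a k c) k k' c (!c) = Pxy p' k k' c (!c) ↔
      ∀ l : Fin d, a l k' = !c → g l = a l k := by
  have mem_forged : ∀ l, l ∈ Pxy p' k k' c (!c) ↔ a l k' = !c ∧ g l = c := by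
    intro l
    by_cases hl : a l k' = c
    · simp [notMem_Pxy_of_eq_none (hnone l hl), hl]
    · replace hl : a l k' = !c := Bool.eq_not.mpr hl
      obtain ⟨t, ht, htk', htk⟩ := hsome l hl
      simp [mem_Pxy_of_eq_some ht, htk', htk, hl]
  simp only [Finset.ext_iff, mem_Pxy_proofSeq, mem_forged]
  refine forall_congr' fun l => ?_
  by_cases hl : a l k' = !c
  · simp [hl, and_comm, Bool.eq_iff_eq_iff_eq]
  · simp [hl]

/-- Deterministic core of Theorem 1: a forged proof sequence `p'` for the opposite
outcome `¬c`, built from the forger's guess `g`, passes the honest aggregator's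
consistency check if and only if the guess is correct at every cryptic index. -/
theorem forged_proof_passes_iff_guess_correct (d n : ℕ) (hd : 0 < d) (hn : 0 < n)
    (a : Fin d → Fin n → Bool) (k k' : Fin n) (hkk' : k ≠ k') (c : Bool)
    (g : Fin d → Bool) (p' : Fin d → Option (Fin n → Bool))
    (hnone : ∀ l : Fin d, a l k' = c → p' l = none)
    (hsome : ∀ l : Fin d, a l k' = !c →
      ∃ t : Fin n → Bool, p' l = some t ∧ t k' = !c ∧ t k = g l) :
    Pxy (proofSeq a k c) k k' c (!c) = Pxy p' k k' c (!c) ↔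
      ∀ l : Fin d, a l k' = !c → g l = a l k :=
  forged_proof_passes_iff_guess_correct_general d n a k k' c g p' hnone hsome
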